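/- For every δ ∈ (0,1) there exists a constant C = C(δ) > 0 such that for every integer n ≥ 1, (1/A_n^δ) · ∫_{Γ₃} | Σ_{k=0}^{n} A_{n−k}^{δ−1} · D*_k(u1,u2) | du1 du2 ≤ C · log(n+1), where Γ₃ = {(u1,u2) ∈ Γ : u1 ≥ 1/(n+1), u2 ≥ 1/(3(n+1))}. -/

import Mathlib

open MeasureTheory Finset

/-- The triangle `Γ = {(u₁,u₂) : 0 ≤ u₂ ≤ u₁/3, 0 ≤ u₁ ≤ 1}`. -/
def GammaT : Set (ℝ × ℝ) := {u | 0 ≤ u.2 ∧ u.2 ≤ u.1 / 3 ∧ 0 ≤ u.1 ∧ u.1 ≤ 1}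

open Finset in
/-- Cesàro numbers: `A_n^δ = (δ+1)(δ+2)⋯(δ+n)/n!`, with `A_0^δ = 1`. -/
noncomputable def cesaroA (δ : ℝ) (n : ℕ) : ℝ :=
  (∏ i ∈ Finset.range n, (δ + i + 1)) / n.factorial

/-- The transformed hexagonal Dirichlet kernel `D*_k`. -/
noncomputable def DstarK (k : ℕ) (u : ℝ × ℝ) : ℝ :=
  (Real.sin (((k : ℝ) + 1) * Real.pi * u.2) *
      Real.sin (((k : ℝ) + 1) * Real.pi * (u.1 + u.2) / 2) *
      Real.sin (((k : ℝ) + 1) * Real.pi * (u.1 - u.2) / 2) -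
    Real.sin ((k : ℝ) * Real.pi * u.2) *
      Real.sin ((k : ℝ) * Real.pi * (u.1 + u.2) / 2) *
      Real.sin ((k : ℝ) * Real.pi * (u.1 - u.2) / 2)) /
    (Real.sin (Real.pi * u.2) * Real.sin (Real.pi * (u.1 + u.2) / 2) *
      Real.sin (Real.pi * (u.1 - u.2) / 2))

/-!
By the product-to-sum formula, `D*_k(u) = (Δ_k(2πu₂) - Δ_k(π(u₁+u₂)) + Δ_k(π(u₁-u₂))) / (4 d(u))`,
where `Δ_k(θ) = sin((k+1)θ) - sin(kθ)` and `d(u)` is the denominator of `D*_k`.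
With `w = e^{iθ}` we have `Δ_k(θ) = Im(w^{k+1} - w^k)`, and reversing the order of summation
turns `∑_k A_{n-k}^{δ-1} Δ_k(θ)` into `(w - 1) w^n ∑_j A_j^{δ-1} w̄^j`. The weights
`A_j^{δ-1} ≤ (j+1)^{δ-1}` decrease, so bounding the terms `j ≲ 1/|w - 1|` one by one and the rest
by Abel's inequality gives `O(|w - 1|^{-δ})`; hence `∑_k A_{n-k}^{δ-1} Δ_k(θ)` is
`O(|θ|^{1-δ})`. On `Γ` all three angles are at most `2πu₁` and `d(u) ≥ u₁² u₂ / 6`, so the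
integrand is `O(u₁^{-1-δ} u₂^{-1})`. Its integral over `[1/(n+1), 1] × [1/(3(n+1)), 1/3]` is
`O((n+1)^δ log(n+1))`, and `A_n^δ ≥ (n+1)^δ`.
-/

open Real

lemma cesaroA_zero (δ : ℝ) : cesaroA δ 0 = 1 := by simp [cesaroA]

lemma cesaroA_succ (δ : ℝ) (n : ℕ) :
    cesaroA δ (n + 1) = cesaroA δ n * ((δ + n + 1) / (n + 1)) := by
  rw [cesaroA, cesaroA, prod_range_succ, Nat.factorial_succ]
  push_cast
  field_simp

lemma cesaroA_pos {δ : ℝ} (hδ : -1 < δ) (n : ℕ) : 0 < cesaroA δ n :=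
  div_pos (prod_pos fun i _ ↦ by linarith [(i.cast_nonneg : (0 : ℝ) ≤ i)])
    (mod_cast n.factorial_pos)

lemma cesaroA_antitone {α : ℝ} (hα1 : -1 < α) (hα0 : α ≤ 0) : Antitone (cesaroA α) :=
  antitone_nat_of_succ_le fun n ↦ by
    rw [cesaroA_succ]
    exact mul_le_of_le_one_right (cesaroA_pos hα1 n).le
      (div_le_one_of_le₀ (by linarith) (by positivity))

lemma one_add_div_le_one_add_inv_rpow {α x : ℝ} (hα1 : -1 ≤ α) (hα0 : α ≤ 0) (hx : 0 < x) :
    1 + α / x ≤ (1 + x⁻¹) ^ α := by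
  have hb : (1 + x⁻¹) ^ (-α) ≤ 1 + -α * x⁻¹ :=
    rpow_one_add_le_one_add_mul_self (by linarith [inv_pos.2 hx]) (by linarith) (by linarith)
  have hs : 0 ≤ -α * x⁻¹ := by have := inv_pos.2 hx; nlinarith
  calc 1 + α / x = 1 - -α * x⁻¹ := by ring
    _ ≤ (1 + -α * x⁻¹)⁻¹ := by
      rw [inv_eq_one_div (1 + _), le_div_iff₀ (by linarith)]
      nlinarith
    _ ≤ ((1 + x⁻¹) ^ (-α))⁻¹ := inv_anti₀ (by positivity) hb
    _ = (1 + x⁻¹) ^ α := by rw [rpow_neg (by positivity), inv_inv]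

lemma cesaroA_le_rpow {α : ℝ} (hα1 : -1 < α) (hα0 : α ≤ 0) (n : ℕ) :
    cesaroA α n ≤ ((n : ℝ) + 1) ^ α := by
  induction n with
  | zero => simp [cesaroA_zero]
  | succ n ih =>
    have hn : (0 : ℝ) < n + 1 := by positivity
    have hstep : (α + n + 1) / (n + 1) ≤ (1 + ((n : ℝ) + 1)⁻¹) ^ α := by
      convert one_add_div_le_one_add_inv_rpow hα1.le hα0 hn using 1
      field_simp
      ring
    calc cesaroA α (n + 1) = cesaroA α n * ((α + n + 1) / (n + 1)) := cesaroA_succ α n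
      _ ≤ ((n : ℝ) + 1) ^ α * (1 + ((n : ℝ) + 1)⁻¹) ^ α :=
        mul_le_mul ih hstep (div_nonneg (by linarith) hn.le) (by positivity)
      _ = ((n + 1 : ℕ) + 1 : ℝ) ^ α := by
        rw [← mul_rpow hn.le (by positivity)]
        push_cast
        field_simp

lemma rpow_le_cesaroA {δ : ℝ} (hδ0 : 0 ≤ δ) (hδ1 : δ ≤ 1) (n : ℕ) :
    ((n : ℝ) + 1) ^ δ ≤ cesaroA δ n := by
  induction n with
  | zero => simp [cesaroA_zero]
  | succ n ih =>
    have hn : (0 : ℝ) < n + 1 := by positivity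
    have hstep : (1 + ((n : ℝ) + 1)⁻¹) ^ δ ≤ (δ + n + 1) / (n + 1) := by
      convert rpow_one_add_le_one_add_mul_self (s := ((n : ℝ) + 1)⁻¹)
        (by linarith [inv_pos.2 hn]) hδ0 hδ1 using 1
      field_simp
      ring
    calc ((n + 1 : ℕ) + 1 : ℝ) ^ δ = ((n : ℝ) + 1) ^ δ * (1 + ((n : ℝ) + 1)⁻¹) ^ δ := by
          rw [← mul_rpow hn.le (by positivity)]
          push_cast
          field_simp
      _ ≤ cesaroA δ n * ((δ + n + 1) / (n + 1)) :=
        mul_le_mul ih hstep (by positivity) (cesaroA_pos (by linarith) n).le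
      _ = cesaroA δ (n + 1) := (cesaroA_succ δ n).symm

lemma sum_range_rpow_sub_one_le {δ : ℝ} (hδ0 : 0 < δ) (hδ1 : δ ≤ 1) (m : ℕ) :
    ∑ j ∈ range m, ((j : ℝ) + 1) ^ (δ - 1) ≤ (m : ℝ) ^ δ / δ := by
  induction m with
  | zero => simp [zero_rpow hδ0.ne']
  | succ m ih =>
    have hx : (0 : ℝ) < m + 1 := by positivity
    -- concavity of `t ↦ t ^ δ`: its chord over `[m, m + 1]` lies above the tangent at `m + 1`
    have hinv : ((m : ℝ) + 1)⁻¹ ≤ 1 := inv_le_one_of_one_le₀ (by simp)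
    have hconc : (m : ℝ) ^ δ ≤ ((m : ℝ) + 1) ^ δ - δ * ((m : ℝ) + 1) ^ (δ - 1) :=
      calc (m : ℝ) ^ δ = (((m : ℝ) + 1) * (1 + -((m : ℝ) + 1)⁻¹)) ^ δ := by
            congr 1; field_simp; ring
        _ = ((m : ℝ) + 1) ^ δ * (1 + -((m : ℝ) + 1)⁻¹) ^ δ := mul_rpow hx.le (by linarith)
        _ ≤ ((m : ℝ) + 1) ^ δ * (1 + δ * -((m : ℝ) + 1)⁻¹) := by
            gcongr
            exact rpow_one_add_le_one_add_mul_self (by linarith) hδ0.le hδ1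
        _ = _ := by rw [rpow_sub_one hx.ne']; ring
    rw [sum_range_succ]
    push_cast
    calc _ ≤ (m : ℝ) ^ δ / δ + ((m : ℝ) + 1) ^ (δ - 1) := by gcongr
      _ ≤ ((m : ℝ) + 1) ^ δ / δ := by
        rw [div_add' _ _ _ hδ0.ne', div_le_div_iff_of_pos_right hδ0]
        linarith

lemma norm_geom_sum_le {𝕜 : Type*} [NormedDivisionRing 𝕜] {v : 𝕜} (hv : ‖v‖ = 1) (hv1 : v ≠ 1)
    (n : ℕ) : ‖∑ i ∈ range n, v ^ i‖ ≤ 2 / ‖v - 1‖ := by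
  rw [geom_sum_eq hv1, norm_div]
  gcongr
  calc ‖v ^ n - 1‖ ≤ ‖v ^ n‖ + ‖(1 : 𝕜)‖ := norm_sub_le _ _
    _ = 2 := by rw [norm_pow, hv, one_pow, norm_one]; norm_num

lemma norm_sum_range_smul_le_of_antitone {E : Type*} [SeminormedAddCommGroup E]
    [NormedSpace ℝ E] {b : ℕ → ℝ} (hb : Antitone b) (hb0 : ∀ i, 0 ≤ b i) {f : ℕ → E} {B : ℝ}
    (hf : ∀ n, ‖∑ i ∈ range n, f i‖ ≤ B) (n : ℕ) :
    ‖∑ i ∈ range n, b i • f i‖ ≤ b 0 * B := by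
  rw [sum_range_by_parts]
  calc _ ≤ ‖b (n - 1) • ∑ i ∈ range n, f i‖
        + ‖∑ i ∈ range (n - 1), (b (i + 1) - b i) • ∑ j ∈ range (i + 1), f j‖ := norm_sub_le _ _
    _ ≤ b (n - 1) * B + ∑ i ∈ range (n - 1), (b i - b (i + 1)) * B := by
      gcongr
      · rw [norm_smul, Real.norm_of_nonneg (hb0 _)]
        exact mul_le_mul_of_nonneg_left (hf n) (hb0 _)
      · refine (norm_sum_le _ _).trans (sum_le_sum fun i _ ↦ ?_)
        rw [norm_smul, Real.norm_of_nonpos (sub_nonpos.2 (hb (Nat.le_succ i))), neg_sub]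
        exact mul_le_mul_of_nonneg_left (hf _) (sub_nonneg.2 (hb (Nat.le_succ i)))
    _ = b 0 * B := by rw [← sum_mul, sum_range_sub']; ring

lemma norm_sum_cesaroA_mul_pow_le {δ : ℝ} (hδ0 : 0 < δ) (hδ1 : δ ≤ 1) {v : ℂ} (hv : ‖v‖ = 1)
    (hv1 : v ≠ 1) (N : ℕ) :
    ‖∑ j ∈ range N, (cesaroA (δ - 1) j : ℂ) * v ^ j‖ ≤ (3 / δ + 2) * ‖v - 1‖ ^ (-δ) := by
  set c := ‖v - 1‖
  have hc0 : 0 < c := norm_pos_iff.2 (sub_ne_zero.2 hv1)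
  have hc2 : c ≤ 2 := (norm_sub_le _ _).trans (by rw [hv, norm_one]; norm_num)
  have hα1 : -1 < δ - 1 := by linarith
  have hα0 : δ - 1 ≤ 0 := by linarith
  -- split the sum at `m ≈ 1 / c`: termwise bound below `m`, Abel's inequality above
  set m := ⌈c⁻¹⌉₊
  have hm : c⁻¹ ≤ m := Nat.le_ceil _
  have hm3 : (m : ℝ) ≤ 3 / c := by
    have := Nat.ceil_lt_add_one (inv_pos.2 hc0).le
    rw [div_eq_mul_inv]
    nlinarith [inv_pos.2 hc0, mul_inv_cancel₀ hc0.ne']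
  have head : ∀ M ≤ m, ‖∑ j ∈ range M, (cesaroA (δ - 1) j : ℂ) * v ^ j‖ ≤ 3 / δ * c ^ (-δ) := by
    intro M hM
    calc _ ≤ ∑ j ∈ range M, ((j : ℝ) + 1) ^ (δ - 1) := by
          refine norm_sum_le_of_le _ fun j _ ↦ ?_
          rw [norm_mul, norm_pow, hv, one_pow, mul_one, Complex.norm_real,
            Real.norm_of_nonneg (cesaroA_pos hα1 j).le]
          exact cesaroA_le_rpow hα1 hα0 j
      _ ≤ ∑ j ∈ range m, ((j : ℝ) + 1) ^ (δ - 1) :=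
          sum_le_sum_of_subset_of_nonneg (range_mono hM) fun _ _ _ ↦ by positivity
      _ ≤ (m : ℝ) ^ δ / δ := sum_range_rpow_sub_one_le hδ0 hδ1 m
      _ ≤ (3 / c) ^ δ / δ := by gcongr
      _ ≤ 3 / δ * c ^ (-δ) := by
          have h3 : (3 : ℝ) ^ δ ≤ 3 := by
            simpa using rpow_le_rpow_of_exponent_le (by norm_num : (1 : ℝ) ≤ 3) hδ1
          rw [div_rpow (by norm_num) hc0.le, rpow_neg hc0.le, div_eq_mul_inv, div_eq_mul_inv,
            div_eq_mul_inv]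
          have : 0 ≤ (c ^ δ)⁻¹ * δ⁻¹ := by positivity
          nlinarith
  have tail : ∀ n, ‖∑ i ∈ range n, (cesaroA (δ - 1) (m + i) : ℂ) * v ^ i‖ ≤ 2 * c ^ (-δ) := by
    intro n
    calc _ ≤ cesaroA (δ - 1) m * (2 / c) := by
          simpa [Complex.real_smul] using norm_sum_range_smul_le_of_antitone
            (fun i j hij ↦ cesaroA_antitone hα1 hα0 (Nat.add_le_add_left hij m))
            (fun i ↦ (cesaroA_pos hα1 (m + i)).le) (norm_geom_sum_le hv hv1) n
      _ ≤ ((m : ℝ) + 1) ^ (δ - 1) * (2 / c) := by gcongr; exact cesaroA_le_rpow hα1 hα0 m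
      _ ≤ c⁻¹ ^ (δ - 1) * (2 / c) :=
          mul_le_mul_of_nonneg_right (rpow_le_rpow_of_nonpos (by positivity) (by linarith) hα0)
            (by positivity)
      _ = 2 * c ^ (-δ) := by
          rw [inv_rpow hc0.le, ← rpow_neg hc0.le, div_eq_mul_inv, ← rpow_neg_one,
            mul_left_comm, ← rpow_add hc0]
          ring_nf
  rcases le_or_gt N m with hN | hN
  · exact (head N hN).trans (by gcongr; linarith)
  obtain ⟨n, rfl⟩ := Nat.exists_eq_add_of_le hN.le
  calc _ ≤ ‖∑ j ∈ range m, (cesaroA (δ - 1) j : ℂ) * v ^ j‖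
        + ‖v ^ m * ∑ i ∈ range n, (cesaroA (δ - 1) (m + i) : ℂ) * v ^ i‖ := by
        rw [sum_range_add, mul_sum]
        refine (norm_add_le _ _).trans_eq ?_
        congr 2
        exact sum_congr rfl fun i _ ↦ by ring
    _ ≤ 3 / δ * c ^ (-δ) + 2 * c ^ (-δ) := by
        rw [norm_mul, norm_pow, hv, one_pow, one_mul]
        exact add_le_add (head m le_rfl) (tail n)
    _ = (3 / δ + 2) * c ^ (-δ) := by ring

lemma norm_sum_cesaroA_mul_pow_sub_le {δ : ℝ} (hδ0 : 0 < δ) (hδ1 : δ ≤ 1) {w : ℂ}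
    (hw : ‖w‖ = 1) (n : ℕ) :
    ‖∑ k ∈ range (n + 1), (cesaroA (δ - 1) (n - k) : ℂ) * (w ^ (k + 1) - w ^ k)‖ ≤
      (3 / δ + 2) * ‖w - 1‖ ^ (1 - δ) := by
  rcases eq_or_ne w 1 with rfl | hw1
  · simp only [one_pow, sub_self, mul_zero, sum_const_zero, norm_zero]
    positivity
  have hw0 : w ≠ 0 := norm_ne_zero_iff.1 (by rw [hw]; exact one_ne_zero)
  have hc0 : 0 < ‖w - 1‖ := norm_pos_iff.2 (sub_ne_zero.2 hw1)
  have hreflect : ∑ k ∈ range (n + 1), (cesaroA (δ - 1) (n - k) : ℂ) * (w ^ (k + 1) - w ^ k) =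
      (w - 1) * w ^ n * ∑ j ∈ range (n + 1), (cesaroA (δ - 1) j : ℂ) * w⁻¹ ^ j := by
    rw [mul_assoc, mul_sum, mul_sum, ← sum_range_reflect]
    refine sum_congr rfl fun j hj ↦ ?_
    have hjn : j ≤ n := Nat.lt_succ_iff.1 (mem_range.1 hj)
    rw [show n + 1 - 1 - j = n - j by omega, Nat.sub_sub_self hjn, pow_succ, inv_pow,
      pow_sub₀ w hw0 hjn]
    ring
  have hinv : ‖w⁻¹ - 1‖ = ‖w - 1‖ := by
    rw [← norm_neg, ← one_mul (-(w⁻¹ - 1)), ← inv_mul_cancel₀ hw0, mul_assoc, norm_mul, norm_inv,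
      hw, inv_one, one_mul]
    congr 1
    field_simp
    ring
  have hw' : ‖w⁻¹‖ = 1 := by rw [norm_inv, hw, inv_one]
  rw [hreflect, norm_mul, norm_mul, norm_pow, hw, one_pow, mul_one]
  calc _ ≤ ‖w - 1‖ * ((3 / δ + 2) * ‖w - 1‖ ^ (-δ)) := by
        gcongr
        simpa [hinv] using norm_sum_cesaroA_mul_pow_le hδ0 hδ1 hw'
          (inv_ne_one.2 hw1) (n + 1)
    _ = (3 / δ + 2) * ‖w - 1‖ ^ (1 - δ) := by
        rw [sub_eq_add_neg 1 δ, rpow_add hc0, rpow_one]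
        ring

lemma abs_sum_cesaroA_mul_sin_sub_le {δ : ℝ} (hδ0 : 0 < δ) (hδ1 : δ ≤ 1) (n : ℕ) (θ : ℝ) :
    |∑ k ∈ range (n + 1), cesaroA (δ - 1) (n - k) * (sin ((k + 1) * θ) - sin (k * θ))| ≤
      (3 / δ + 2) * |θ| ^ (1 - δ) := by
  set w := Complex.exp (θ * Complex.I)
  have hpow : ∀ k : ℕ, (w ^ k).im = sin (k * θ) := fun k ↦ by
    rw [← Complex.exp_nat_mul, ← mul_assoc, ← Complex.ofReal_natCast, ← Complex.ofReal_mul,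
      Complex.exp_ofReal_mul_I_im]
  have hsum : ∑ k ∈ range (n + 1), cesaroA (δ - 1) (n - k) * (sin ((k + 1) * θ) - sin (k * θ)) =
      (∑ k ∈ range (n + 1), (cesaroA (δ - 1) (n - k) : ℂ) * (w ^ (k + 1) - w ^ k)).im := by
    rw [Complex.im_sum]
    refine sum_congr rfl fun k _ ↦ ?_
    rw [Complex.im_ofReal_mul, Complex.sub_im, hpow, hpow]
    push_cast
    rfl
  have hw1 : ‖w - 1‖ ≤ |θ| := by
    have h := norm_exp_I_mul_ofReal_sub_one_le (x := θ)
    rwa [mul_comm, Real.norm_eq_abs] at h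
  rw [hsum]
  calc _ ≤ _ := Complex.abs_im_le_norm _
    _ ≤ (3 / δ + 2) * ‖w - 1‖ ^ (1 - δ) :=
        norm_sum_cesaroA_mul_pow_sub_le hδ0 hδ1 (Complex.norm_exp_ofReal_mul_I θ) n
    _ ≤ (3 / δ + 2) * |θ| ^ (1 - δ) := by gcongr

lemma sin_mul_sin_mul_sin (a b : ℝ) :
    sin a * sin ((b + a) / 2) * sin ((b - a) / 2) =
      (sin (2 * a) - sin (b + a) + sin (b - a)) / 4 := by
  obtain ⟨s, t, rfl, rfl⟩ : ∃ s t, a = s - t ∧ b = s + t :=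
    ⟨(b + a) / 2, (b - a) / 2, by ring, by ring⟩
  rw [show (s + t + (s - t)) / 2 = s by ring, show (s + t - (s - t)) / 2 = t by ring,
    show s + t + (s - t) = 2 * s by ring, show s + t - (s - t) = 2 * t by ring,
    show 2 * (s - t) = 2 * s - 2 * t by ring, sin_sub, sin_sub, sin_two_mul, sin_two_mul,
    cos_two_mul, cos_two_mul]
  linear_combination
    (-(sin s * cos s)) * sin_sq_add_cos_sq t + (sin t * cos t) * sin_sq_add_cos_sq s

lemma le_sin_pi_mul {s : ℝ} (h0 : 0 ≤ s) (h1 : s ≤ 2 / 3) : s ≤ sin (π * s) := by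
  rcases le_total s (1 / 2) with hs | hs
  · calc s ≤ 2 / π * (π * s) := by field_simp; linarith
      _ ≤ sin (π * s) := mul_le_sin (by positivity) (by nlinarith [pi_pos])
  · rw [← sin_pi_sub, show π - π * s = π * (1 - s) by ring]
    calc s ≤ 2 / π * (π * (1 - s)) := by field_simp; linarith
      _ ≤ sin (π * (1 - s)) := mul_le_sin (by nlinarith [pi_pos]) (by nlinarith [pi_pos])

lemma le_sin_mul_sin_mul_sin {x y : ℝ} (hy : 0 ≤ y) (hyx : y ≤ x / 3) (hx : x ≤ 1) :
    x ^ 2 * y / 6 ≤ sin (π * y) * sin (π * (x + y) / 2) * sin (π * (x - y) / 2) := by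
  have h1 := le_sin_pi_mul hy (by linarith)
  have h2 := le_sin_pi_mul (s := (x + y) / 2) (by linarith) (by linarith)
  have h3 := le_sin_pi_mul (s := (x - y) / 2) (by linarith) (by linarith)
  rw [← mul_div_assoc] at h2 h3
  calc x ^ 2 * y / 6 ≤ y * ((x + y) / 2) * ((x - y) / 2) := by
        nlinarith [mul_nonneg (mul_nonneg hy (by linarith : 0 ≤ x - 3 * y))
          (by linarith : 0 ≤ x + 3 * y)]
    _ ≤ _ := mul_le_mul (mul_le_mul h1 h2 (by linarith) (by linarith)) h3 (by linarith)
        (by nlinarith)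

lemma DstarK_eq (k : ℕ) (u : ℝ × ℝ) :
    DstarK k u =
      ((sin ((k + 1) * (2 * π * u.2)) - sin (k * (2 * π * u.2)))
        - (sin ((k + 1) * (π * (u.1 + u.2))) - sin (k * (π * (u.1 + u.2))))
        + (sin ((k + 1) * (π * (u.1 - u.2))) - sin (k * (π * (u.1 - u.2))))) /
      (4 * (sin (π * u.2) * sin (π * (u.1 + u.2) / 2) * sin (π * (u.1 - u.2) / 2))) := by
  have key : ∀ m : ℝ, sin (m * π * u.2) * sin (m * π * (u.1 + u.2) / 2) *
      sin (m * π * (u.1 - u.2) / 2) = (sin (m * (2 * π * u.2)) - sin (m * (π * (u.1 + u.2)))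
        + sin (m * (π * (u.1 - u.2)))) / 4 := fun m ↦ by
    convert sin_mul_sin_mul_sin (m * π * u.2) (m * π * u.1) using 3 <;> ring_nf
  rw [DstarK, key, key, ← sub_div, div_div]
  ring_nf

lemma abs_sum_cesaroA_mul_DstarK_le {δ : ℝ} (hδ0 : 0 < δ) (hδ1 : δ ≤ 1) (n : ℕ) {x y : ℝ}
    (hy : 0 < y) (hyx : y ≤ x / 3) (hx : x ≤ 1) :
    |∑ k ∈ range (n + 1), cesaroA (δ - 1) (n - k) * DstarK k (x, y)| ≤
      9 * π * (3 / δ + 2) * (x ^ (-(1 + δ)) * y⁻¹) := by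
  set C := 3 / δ + 2
  set S : ℝ → ℝ := fun θ ↦
    ∑ k ∈ range (n + 1), cesaroA (δ - 1) (n - k) * (sin ((k + 1) * θ) - sin (k * θ))
  set d := sin (π * y) * sin (π * (x + y) / 2) * sin (π * (x - y) / 2)
  have hx0 : 0 < x := by linarith
  have hd : x ^ 2 * y / 6 ≤ d := le_sin_mul_sin_mul_sin hy.le hyx hx
  have hd0 : 0 < d := lt_of_lt_of_le (by positivity) hd
  have hS : ∀ θ, |θ| ≤ 2 * π * x → |S θ| ≤ C * (2 * π * x ^ (1 - δ)) := fun θ hθ ↦ by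
    have h2π : (2 * π) ^ (1 - δ) ≤ 2 * π :=
      rpow_le_self_of_one_le (by nlinarith [pi_gt_three]) (by linarith)
    calc |S θ| ≤ C * |θ| ^ (1 - δ) := abs_sum_cesaroA_mul_sin_sub_le hδ0 hδ1 n θ
      _ ≤ C * (2 * π * x) ^ (1 - δ) := by gcongr
      _ ≤ C * (2 * π * x ^ (1 - δ)) := by
        rw [mul_rpow (by positivity) hx0.le]
        gcongr
  have hsplit : ∑ k ∈ range (n + 1), cesaroA (δ - 1) (n - k) * DstarK k (x, y) =
      (S (2 * π * y) - S (π * (x + y)) + S (π * (x - y))) / (4 * d) := by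
    simp only [S, DstarK_eq, ← sum_sub_distrib, ← sum_add_distrib, sum_div]
    exact sum_congr rfl fun k _ ↦ by ring
  have hnum : |S (2 * π * y) - S (π * (x + y)) + S (π * (x - y))| ≤
      3 * (C * (2 * π * x ^ (1 - δ))) := by
    have h1 := hS (2 * π * y) (by rw [abs_of_pos (by positivity)]; nlinarith [pi_pos])
    have h2 := hS (π * (x + y)) (by rw [abs_of_pos (by positivity)]; nlinarith [pi_pos])
    have h3 := hS (π * (x - y)) (by rw [abs_of_nonneg (by nlinarith [pi_pos])]; nlinarith [pi_pos])
    have := abs_add_le (S (2 * π * y) - S (π * (x + y))) (S (π * (x - y)))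
    have := abs_sub (S (2 * π * y)) (S (π * (x + y)))
    linarith
  rw [hsplit, abs_div, abs_of_pos (by linarith : 0 < 4 * d)]
  calc _ ≤ 3 * (C * (2 * π * x ^ (1 - δ))) / (4 * (x ^ 2 * y / 6)) :=
        div_le_div₀ (by positivity) hnum (by positivity) (by linarith)
    _ = 9 * π * C * (x ^ (1 - δ) * (x ^ 2)⁻¹ * y⁻¹) := by field_simp; ring
    _ = 9 * π * C * (x ^ (-(1 + δ)) * y⁻¹) := by
      rw [← rpow_two, ← rpow_neg hx0.le, ← rpow_add hx0]
      ring_nf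

lemma measurableSet_GammaT : MeasurableSet GammaT := by
  simp only [GammaT, Set.ofPred_and]
  exact (measurableSet_le measurable_const measurable_snd).inter
    ((measurableSet_le measurable_snd (measurable_fst.div_const 3)).inter
      ((measurableSet_le measurable_const measurable_fst).inter
        (measurableSet_le measurable_fst measurable_const)))

lemma integrableOn_Icc_prod_rpow_mul_inv {a₁ a₂ b₁ b₂ : ℝ} (ha : 0 < a₁) (hb : 0 < b₁) (r : ℝ) :
    IntegrableOn (fun u : ℝ × ℝ ↦ u.1 ^ r * u.2⁻¹) (Set.Icc a₁ a₂ ×ˢ Set.Icc b₁ b₂) := by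
  refine ContinuousOn.integrableOn_compact (isCompact_Icc.prod isCompact_Icc) ?_
  refine (continuous_fst.continuousOn.rpow_const fun u hu ↦ ?_).mul
    (continuous_snd.continuousOn.inv₀ fun u hu ↦ ?_)
  · exact Or.inl (ha.trans_le hu.1.1).ne'
  · exact (hb.trans_le hu.2.1).ne'

lemma setIntegral_Icc_prod_rpow_mul_inv {a₁ a₂ b₁ b₂ δ : ℝ} (ha : 0 < a₁) (ha' : a₁ ≤ a₂)
    (hb : 0 < b₁) (hb' : b₁ ≤ b₂) (hδ : δ ≠ 0) :
    ∫ u in Set.Icc a₁ a₂ ×ˢ Set.Icc b₁ b₂, u.1 ^ (-(1 + δ)) * u.2⁻¹ =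
      (a₁ ^ (-δ) - a₂ ^ (-δ)) / δ * log (b₂ / b₁) := by
  have hr : -(1 + δ) ≠ -1 := by contrapose! hδ; linarith
  rw [Measure.volume_eq_prod,
    setIntegral_prod_mul (fun x : ℝ ↦ x ^ (-(1 + δ))) (fun y : ℝ ↦ y⁻¹),
    integral_Icc_eq_integral_Ioc, ← intervalIntegral.integral_of_le ha',
    integral_Icc_eq_integral_Ioc, ← intervalIntegral.integral_of_le hb',
    integral_inv (Set.notMem_uIcc_of_lt hb (hb.trans_le hb')),
    integral_rpow (Or.inr ⟨hr, Set.notMem_uIcc_of_lt ha (ha.trans_le ha')⟩)]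
  rw [show -(1 + δ) + 1 = -δ by ring, div_neg, ← neg_div, neg_sub]

lemma setIntegral_le_of_le_rpow_mul_inv {f : ℝ × ℝ → ℝ} {S : Set (ℝ × ℝ)}
    {a₁ a₂ b₁ b₂ δ K : ℝ} (hS : MeasurableSet S) (hSR : S ⊆ Set.Icc a₁ a₂ ×ˢ Set.Icc b₁ b₂)
    (ha : 0 < a₁) (ha' : a₁ ≤ a₂) (hb : 0 < b₁) (hb' : b₁ ≤ b₂) (hδ : δ ≠ 0) (hK : 0 ≤ K)
    (hf0 : ∀ u ∈ S, 0 ≤ f u) (hf : ∀ u ∈ S, f u ≤ K * (u.1 ^ (-(1 + δ)) * u.2⁻¹)) :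
    ∫ u in S, f u ≤ K * ((a₁ ^ (-δ) - a₂ ^ (-δ)) / δ * log (b₂ / b₁)) := by
  have hR : IntegrableOn (fun u : ℝ × ℝ ↦ K * (u.1 ^ (-(1 + δ)) * u.2⁻¹))
      (Set.Icc a₁ a₂ ×ˢ Set.Icc b₁ b₂) :=
    (integrableOn_Icc_prod_rpow_mul_inv ha hb _).const_mul K
  calc ∫ u in S, f u ≤ ∫ u in S, K * (u.1 ^ (-(1 + δ)) * u.2⁻¹) :=
        integral_mono_of_nonneg (ae_restrict_of_forall_mem hS hf0) (hR.mono_set hSR)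
          (ae_restrict_of_forall_mem hS hf)
    _ ≤ ∫ u in Set.Icc a₁ a₂ ×ˢ Set.Icc b₁ b₂, K * (u.1 ^ (-(1 + δ)) * u.2⁻¹) :=
        setIntegral_mono_set hR (ae_restrict_of_forall_mem
          (measurableSet_Icc.prod measurableSet_Icc) fun u ⟨⟨hu, _⟩, hv, _⟩ ↦ by
            have : 0 < u.1 := ha.trans_le hu
            have : 0 < u.2 := hb.trans_le hv
            positivity) hSR.eventuallyLE
    _ = K * ((a₁ ^ (-δ) - a₂ ^ (-δ)) / δ * log (b₂ / b₁)) := by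
        rw [integral_const_mul, setIntegral_Icc_prod_rpow_mul_inv ha ha' hb hb' hδ]

theorem stmt_14 :
    ∀ δ : ℝ, 0 < δ → δ < 1 → ∃ C : ℝ, 0 < C ∧
      ∀ n : ℕ, 1 ≤ n →
        (1 / cesaroA δ n) *
            ∫ u in GammaT ∩
                {u : ℝ × ℝ | 1 / ((n : ℝ) + 1) ≤ u.1 ∧ 1 / (3 * ((n : ℝ) + 1)) ≤ u.2},
              |∑ k ∈ Finset.range (n + 1), cesaroA (δ - 1) (n - k) * DstarK k u| ≤
          C * Real.log (n + 1) := by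
  intro δ hδ0 hδ1
  set K := 9 * π * (3 / δ + 2)
  refine ⟨K / δ, by positivity, fun n _ ↦ ?_⟩
  have hn : (1 : ℝ) ≤ n + 1 := by linarith [(n.cast_nonneg : (0 : ℝ) ≤ n)]
  have hint := setIntegral_le_of_le_rpow_mul_inv
    (f := fun u ↦ |∑ k ∈ range (n + 1), cesaroA (δ - 1) (n - k) * DstarK k u|)
    (S := GammaT ∩ {u : ℝ × ℝ | 1 / ((n : ℝ) + 1) ≤ u.1 ∧ 1 / (3 * ((n : ℝ) + 1)) ≤ u.2})
    (a₁ := 1 / ((n : ℝ) + 1)) (a₂ := 1) (b₁ := 1 / (3 * ((n : ℝ) + 1))) (b₂ := 1 / 3)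
    (measurableSet_GammaT.inter ((measurableSet_le measurable_const measurable_fst).inter
      (measurableSet_le measurable_const measurable_snd)))
    (fun u ⟨⟨_, h2, _, h4⟩, h5, h6⟩ ↦ ⟨⟨h5, h4⟩, h6, by linarith⟩) (by positivity)
    (div_le_one_of_le₀ hn (by positivity)) (by positivity)
    (by rw [div_le_div_iff₀ (by positivity) (by norm_num)]; linarith) hδ0.ne' (by positivity)
    (fun _ _ ↦ abs_nonneg _) fun u ⟨⟨_, h2, _, h4⟩, _, h6⟩ ↦
      abs_sum_cesaroA_mul_DstarK_le hδ0 hδ1.le n ((by positivity : (0 : ℝ) < _).trans_le h6) h2 h4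
  rw [show (1 / ((n : ℝ) + 1)) ^ (-δ) = ((n : ℝ) + 1) ^ δ by
      rw [one_div, inv_rpow (by positivity), rpow_neg (by positivity), inv_inv],
    one_rpow, show (1 : ℝ) / 3 / (1 / (3 * (n + 1))) = n + 1 by field_simp] at hint
  rw [one_div_mul_eq_div, div_le_iff₀ (cesaroA_pos (by linarith) n)]
  have hlog : 0 ≤ log ((n : ℝ) + 1) := log_nonneg hn
  calc _ ≤ K * ((((n : ℝ) + 1) ^ δ - 1) / δ * log (n + 1)) := hint
    _ = K / δ * log (n + 1) * ((n : ℝ) + 1) ^ δ - K / δ * log (n + 1) := by ring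
    _ ≤ K / δ * log (n + 1) * ((n : ℝ) + 1) ^ δ := sub_le_self _ (by positivity)
    _ ≤ K / δ * log (n + 1) * cesaroA δ n := by
        gcongr
        exact rpow_le_cesaroA hδ0.le hδ1.le n
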